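/- arXiv:math/0509281 — 2 statements merged into one kernel-verified Lean document; each statement's English description precedes it below -/
import Mathlib

section
/- Jacobi's triple product identity: for $0<|q|<1$ and $z \neq 0$, $\sum_{k=-\infty}^\infty q^{\binom{k}{2}} z^k = (q;q)_\infty \, (-z;q)_\infty \, (-q/z;q)_\infty$. -/
/-!
Cauchy's argument. The Gaussian binomial coefficients `[N, k]_q` obey two Pascal recurrences,
and inducting with them gives the finite identity
`(-z;q)_m (-q/z;q)_n = ∑_k [m+n, n+k]_q q^(k(k-1)/2) z^k`.
For `m = n`, the coefficient `[2n, n+k]_q = (q;q)_{2n} / ((q;q)_{n+k} (q;q)_{n-k})` tends to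
`1/(q;q)_∞` for each fixed `k`, and all these coefficients are bounded uniformly, so Tannery's
theorem lets `n → ∞` termwise; the dominating series is a Jacobi theta series.
-/

noncomputable def qPoch (a q : ℂ) (n : ℕ) : ℂ := ∏ j ∈ Finset.range n, (1 - a * q ^ j)

noncomputable def qPochInf (a q : ℂ) : ℂ := ∏' j : ℕ, (1 - a * q ^ j)

open Filter Topology

section qPochhammer

variable {q : ℂ}

lemma qPoch_succ (a q : ℂ) (n : ℕ) : qPoch a q (n + 1) = qPoch a q n * (1 - a * q ^ n) :=
  Finset.prod_range_succ _ _

lemma summable_norm_neg_mul_pow (a : ℂ) (hq : ‖q‖ < 1) :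
    Summable fun j : ℕ ↦ ‖-(a * q ^ j)‖ := by
  simpa [norm_mul, norm_pow] using
    (summable_geometric_of_lt_one (norm_nonneg q) hq).mul_left ‖a‖

lemma tendsto_qPoch (a : ℂ) (hq : ‖q‖ < 1) :
    Tendsto (qPoch a q) atTop (𝓝 (qPochInf a q)) := by
  have := (multipliable_one_add_of_summable (summable_norm_neg_mul_pow a hq)).tendsto_prod_tprod_nat
  simp only [← sub_eq_add_neg] at this
  exact this

lemma one_sub_mul_pow_self_ne_zero (hq : ‖q‖ < 1) (j : ℕ) : 1 - q * q ^ j ≠ 0 := by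
  rw [sub_ne_zero, ne_comm, ← pow_succ']
  intro h
  have := pow_lt_one₀ (norm_nonneg q) hq j.succ_ne_zero
  rw [← norm_pow, h, norm_one] at this
  exact lt_irrefl 1 this

lemma qPoch_self_ne_zero (hq : ‖q‖ < 1) (n : ℕ) : qPoch q q n ≠ 0 :=
  Finset.prod_ne_zero_iff.mpr fun j _ ↦ one_sub_mul_pow_self_ne_zero hq j

lemma qPochInf_self_ne_zero (hq : ‖q‖ < 1) : qPochInf q q ≠ 0 := by
  have := tprod_one_add_ne_zero_of_summable
    (fun j ↦ by simpa [← sub_eq_add_neg] using one_sub_mul_pow_self_ne_zero hq j)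
    (summable_norm_neg_mul_pow q hq)
  simp only [← sub_eq_add_neg] at this
  exact this

end qPochhammer

noncomputable def gaussBinom (q : ℂ) : ℕ → ℤ → ℂ
  | 0, k => if k = 0 then 1 else 0
  | N + 1, k => q ^ k * gaussBinom q N k + gaussBinom q N (k - 1)

namespace gaussBinom

variable {q : ℂ}

lemma zero_left (k : ℤ) : gaussBinom q 0 k = if k = 0 then 1 else 0 := rfl

lemma succ_left (N : ℕ) (k : ℤ) :
    gaussBinom q (N + 1) k = q ^ k * gaussBinom q N k + gaussBinom q N (k - 1) := rfl

lemma eq_zero_of_neg_or_lt (N : ℕ) {k : ℤ} (hk : k < 0 ∨ N < k) : gaussBinom q N k = 0 := by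
  induction N generalizing k with
  | zero => rw [zero_left, if_neg (by omega)]
  | succ N ih =>
    rw [succ_left, ih (by omega), ih (by omega), mul_zero, add_zero]

lemma mul_qPoch_mul_qPoch (a b : ℕ) :
    gaussBinom q (a + b) a * qPoch q q a * qPoch q q b = qPoch q q (a + b) := by
  induction h : a + b generalizing a b with
  | zero =>
    obtain ⟨rfl, rfl⟩ : a = 0 ∧ b = 0 := by omega
    simp [zero_left, qPoch]
  | succ N ih =>
    rcases a with _ | a
    · obtain rfl : b = N + 1 := by omega
      have := ih 0 N (by omega)
      simp only [Nat.cast_zero, succ_left, zpow_zero, one_mul,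
        eq_zero_of_neg_or_lt N (show (0 - 1 : ℤ) < 0 ∨ _ by omega), add_zero] at this ⊢
      rw [qPoch_succ]
      linear_combination (1 - q * q ^ N) * this
    rcases b with _ | b
    · obtain rfl : a = N := by omega
      have := ih a 0 (by omega)
      simp only [Nat.cast_add, Nat.cast_one, succ_left, add_sub_cancel_right, mul_zero, zero_add,
        eq_zero_of_neg_or_lt a (show _ ∨ (a : ℤ) < a + 1 by omega)] at this ⊢
      rw [qPoch_succ]
      linear_combination (1 - q * q ^ a) * this
    obtain rfl : N = a + b + 1 := by omega
    have h₁ := ih (a + 1) b (by omega)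
    have h₂ := ih a (b + 1) (by omega)
    rw [succ_left, show ((a + 1 : ℕ) : ℤ) - 1 = a by push_cast; ring, zpow_natCast,
      qPoch_succ q q (a + b + 1)]
    rw [qPoch_succ q q a] at h₁ ⊢
    rw [qPoch_succ q q b] at h₂ ⊢
    linear_combination q ^ (a + 1) * (1 - q * q ^ b) * h₁ + (1 - q * q ^ a) * h₂

lemma one_sub_zpow_mul (hq0 : q ≠ 0) (N : ℕ) (k : ℤ) :
    (1 - q ^ k) * gaussBinom q N k = (1 - q ^ ((N : ℤ) + 1 - k)) * gaussBinom q N (k - 1) := by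
  induction N generalizing k with
  | zero =>
    simp only [zero_left]
    split_ifs <;> simp_all [sub_eq_zero]
  | succ N ih =>
    have h₁ := ih k
    have h₂ := ih (k - 1)
    rw [succ_left, succ_left]
    simp only [zpow_sub₀ hq0, zpow_add₀ hq0, zpow_natCast, zpow_one, Nat.cast_add, Nat.cast_one,
      sub_sub] at h₁ h₂ ⊢
    field_simp at h₁ h₂ ⊢
    linear_combination q * q ^ k * h₁ + h₂

lemma succ_left' (hq0 : q ≠ 0) (N : ℕ) (k : ℤ) :
    gaussBinom q (N + 1) k =
      gaussBinom q N k + q ^ ((N : ℤ) + 1 - k) * gaussBinom q N (k - 1) := by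
  rw [succ_left]
  linear_combination -one_sub_zpow_mul hq0 N k

lemma eq_qPoch_div (hq : ‖q‖ < 1) (a b : ℕ) :
    gaussBinom q (a + b) a = qPoch q q (a + b) / (qPoch q q a * qPoch q q b) := by
  rw [eq_div_iff (mul_ne_zero (qPoch_self_ne_zero hq a) (qPoch_self_ne_zero hq b)), ← mul_assoc,
    mul_qPoch_mul_qPoch]

lemma exists_norm_le (hq : ‖q‖ < 1) : ∃ C, ∀ N k, ‖gaussBinom q N k‖ ≤ C := by
  obtain ⟨U, hU⟩ := (tendsto_qPoch q hq).norm.bddAbove_range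
  obtain ⟨V, hV⟩ := ((tendsto_qPoch q hq).inv₀ (qPochInf_self_ne_zero hq)).norm.bddAbove_range
  have hU₀ : 0 ≤ U := (norm_nonneg _).trans (hU ⟨0, rfl⟩)
  have hV₀ : 0 ≤ V := (norm_nonneg _).trans (hV ⟨0, rfl⟩)
  refine ⟨U * (V * V), fun N k ↦ ?_⟩
  by_cases hk : k < 0 ∨ N < k
  · rw [eq_zero_of_neg_or_lt N hk, norm_zero]
    positivity
  obtain ⟨a, rfl⟩ : ∃ a : ℕ, k = a := ⟨k.toNat, by omega⟩
  obtain ⟨b, rfl⟩ : ∃ b, N = a + b := ⟨N - a, by omega⟩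
  rw [eq_qPoch_div hq, div_eq_mul_inv, mul_inv, norm_mul, norm_mul]
  gcongr
  exacts [hU ⟨_, rfl⟩, hV ⟨_, rfl⟩, hV ⟨_, rfl⟩]

lemma tendsto_two_mul_add (hq : ‖q‖ < 1) (k : ℤ) :
    Tendsto (fun n : ℕ ↦ gaussBinom q (2 * n) (n + k)) atTop (𝓝 (qPochInf q q)⁻¹) := by
  have hP := tendsto_qPoch q hq
  have hshift (l : ℤ) : Tendsto (fun n : ℕ ↦ ((n : ℤ) + l).toNat) atTop atTop :=
    tendsto_atTop_atTop.2 fun b ↦ ⟨b + l.natAbs, fun n hn ↦ by omega⟩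
  have hlim := (hP.comp (tendsto_id.const_mul_atTop' two_pos)).div
    ((hP.comp (hshift k)).mul (hP.comp (hshift (-k))))
    (mul_ne_zero (qPochInf_self_ne_zero hq) (qPochInf_self_ne_zero hq))
  rw [div_mul_cancel_left₀ (qPochInf_self_ne_zero hq)] at hlim
  refine hlim.congr' ((eventually_ge_atTop k.natAbs).mono fun n hn ↦ ?_)
  have hab : 2 * n = ((n : ℤ) + k).toNat + ((n : ℤ) + -k).toNat := by omega
  change qPoch q q (2 * n) /
    (qPoch q q ((n : ℤ) + k).toNat * qPoch q q ((n : ℤ) + -k).toNat) = _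
  rw [hab, ← eq_qPoch_div hq]
  congr 1 <;> omega

end gaussBinom

noncomputable def thetaTerm (q z : ℂ) (k : ℤ) : ℂ := q ^ (k * (k - 1) / 2) * z ^ k

section FiniteTripleProduct

variable {q z : ℂ}

lemma thetaTerm_add_one (hq0 : q ≠ 0) (hz : z ≠ 0) (k : ℤ) :
    thetaTerm q z (k + 1) = q ^ k * z * thetaTerm q z k := by
  have hexp : (k + 1) * (k + 1 - 1) / 2 = k * (k - 1) / 2 + k := by
    rw [show (k + 1) * (k + 1 - 1) = k * (k - 1) + k * 2 by ring,
      Int.add_mul_ediv_right _ _ two_ne_zero]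
  rw [thetaTerm, thetaTerm, hexp, zpow_add₀ hq0, zpow_add_one₀ hz]
  ring

lemma hasSum_gaussBinom_mul_thetaTerm_zero_left (hq0 : q ≠ 0) (hz : z ≠ 0) (n : ℕ) :
    HasSum (fun k : ℤ ↦ gaussBinom q n (n + k) * thetaTerm q z k) (qPoch (-q / z) q n) := by
  induction n with
  | zero =>
    have := hasSum_single (f := fun k : ℤ ↦ gaussBinom q 0 (0 + k) * thetaTerm q z k) 0
      fun k hk ↦ by simp [gaussBinom.zero_left, hk]
    simpa [gaussBinom.zero_left, thetaTerm, qPoch] using this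
  | succ n ih =>
    have hf : (fun k : ℤ ↦ gaussBinom q (n + 1) ((n + 1 : ℕ) + k) * thetaTerm q z k) =
        fun k ↦ q ^ (n + 1) / z * (gaussBinom q n (n + (k + 1)) * thetaTerm q z (k + 1)) +
          gaussBinom q n (n + k) * thetaTerm q z k := by
      funext k
      rw [gaussBinom.succ_left, thetaTerm_add_one hq0 hz,
        show ((n + 1 : ℕ) : ℤ) + k - 1 = n + k by push_cast; ring,
        show ((n + 1 : ℕ) : ℤ) + k = n + (k + 1) by push_cast; ring, zpow_add₀ hq0,
        zpow_add_one₀ hq0, zpow_natCast]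
      field_simp
      ring
    have hP : qPoch (-q / z) q (n + 1) =
        q ^ (n + 1) / z * qPoch (-q / z) q n + qPoch (-q / z) q n := by
      rw [qPoch_succ]
      ring
    rw [hf, hP]
    exact (((Equiv.addRight (1 : ℤ)).hasSum_iff.mpr ih).mul_left _).add ih

lemma hasSum_gaussBinom_mul_thetaTerm (hq0 : q ≠ 0) (hz : z ≠ 0) (m n : ℕ) :
    HasSum (fun k : ℤ ↦ gaussBinom q (m + n) (n + k) * thetaTerm q z k)
      (qPoch (-z) q m * qPoch (-q / z) q n) := by
  induction m with
  | zero => simpa [qPoch] using hasSum_gaussBinom_mul_thetaTerm_zero_left hq0 hz n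
  | succ m ih =>
    have hf : (fun k : ℤ ↦ gaussBinom q (m + 1 + n) (n + k) * thetaTerm q z k) =
        fun k ↦ gaussBinom q (m + n) (n + k) * thetaTerm q z k +
          z * q ^ m * (gaussBinom q (m + n) (n + (k - 1)) * thetaTerm q z (k - 1)) := by
      funext k
      have hθ := thetaTerm_add_one hq0 hz (k - 1)
      rw [sub_add_cancel] at hθ
      rw [show m + 1 + n = m + n + 1 by ring, gaussBinom.succ_left' hq0, hθ,
        show ((m + n : ℕ) : ℤ) + 1 - (n + k) = m - (k - 1) by push_cast; ring,
        show (n : ℤ) + k - 1 = n + (k - 1) by ring, zpow_sub₀ hq0, zpow_natCast]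
      field_simp
    have hP : qPoch (-z) q (m + 1) * qPoch (-q / z) q n =
        qPoch (-z) q m * qPoch (-q / z) q n +
          z * q ^ m * (qPoch (-z) q m * qPoch (-q / z) q n) := by
      rw [qPoch_succ]
      ring
    rw [hf, hP]
    exact ih.add (((Equiv.subRight (1 : ℤ)).hasSum_iff.mpr ih).mul_left _)

end FiniteTripleProduct

open Complex Real in
-- `q = e^(2πiτ)` and `z = e^(2πiw) q^(1/2)`
lemma thetaTerm_eq_jacobiTheta₂_term {q z : ℂ} (hq0 : q ≠ 0) (hz : z ≠ 0) (k : ℤ) :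
    thetaTerm q z k =
      jacobiTheta₂_term k ((log z - log q / 2) / (2 * π * I)) (log q / (2 * π * I)) := by
  have hk : ((k * (k - 1) / 2 : ℤ) : ℂ) = k * (k - 1) / 2 := by
    rw [eq_div_iff two_ne_zero, mul_comm]
    exact_mod_cast Int.two_mul_ediv_two_of_even (Int.even_mul_pred_self k)
  have hexp (w : ℂ) (hw : w ≠ 0) (n : ℤ) : w ^ n = cexp (n * log w) := by
    rw [exp_int_mul, exp_log hw]
  rw [thetaTerm, jacobiTheta₂_term, hexp q hq0, hexp z hz, ← Complex.exp_add, hk]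
  congr 1
  field_simp
  ring

lemma summable_thetaTerm {q z : ℂ} (hq0 : q ≠ 0) (hq : ‖q‖ < 1) (hz : z ≠ 0) :
    Summable (thetaTerm q z) := by
  refine ((summable_jacobiTheta₂_term_iff _ _).2 ?_).congr
    fun k ↦ (thetaTerm_eq_jacobiTheta₂_term hq0 hz k).symm
  have him :
      (Complex.log q / (2 * Real.pi * Complex.I)).im = -Real.log ‖q‖ / (2 * Real.pi) := by
    simp only [Complex.div_im, Complex.mul_re, Complex.re_ofNat, Complex.ofReal_re,
      Complex.im_ofNat, Complex.ofReal_im, mul_zero, sub_zero, Complex.I_re, Complex.mul_im,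
      zero_mul, add_zero, Complex.I_im, mul_one, sub_self, map_mul, Complex.normSq_ofNat,
      Complex.normSq_ofReal, Complex.normSq_I, zero_div, Complex.log_re, zero_sub]
    field_simp
  rw [him]
  exact div_pos (neg_pos.2 (Real.log_neg (norm_pos_iff.mpr hq0) hq)) (by positivity)

theorem jacobi_triple_product (q z : ℂ) (hq0 : q ≠ 0) (hq : ‖q‖ < 1) (hz : z ≠ 0) :
    ∑' k : ℤ, q ^ (k * (k - 1) / 2) * z ^ k
      = qPochInf q q * qPochInf (-z) q * qPochInf (-q / z) q := by
  obtain ⟨C, hC⟩ := gaussBinom.exists_norm_le hq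
  have hTannery : Tendsto (fun n : ℕ ↦ ∑' k, gaussBinom q (2 * n) (n + k) * thetaTerm q z k)
      atTop (𝓝 (∑' k, (qPochInf q q)⁻¹ * thetaTerm q z k)) :=
    tendsto_tsum_of_dominated_convergence ((summable_thetaTerm hq0 hq hz).norm.mul_left C)
      (fun k ↦ (gaussBinom.tendsto_two_mul_add hq k).mul_const _)
      (.of_forall fun n k ↦ by rw [norm_mul]; gcongr; exact hC _ _)
  have hFinite : Tendsto (fun n : ℕ ↦ ∑' k, gaussBinom q (2 * n) (n + k) * thetaTerm q z k)
      atTop (𝓝 (qPochInf (-z) q * qPochInf (-q / z) q)) := by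
    refine ((tendsto_qPoch (-z) hq).mul (tendsto_qPoch (-q / z) hq)).congr fun n ↦ ?_
    rw [two_mul, (hasSum_gaussBinom_mul_thetaTerm hq0 hz n n).tsum_eq]
  rw [tsum_mul_left] at hTannery
  have := tendsto_nhds_unique hFinite hTannery
  change ∑' k, thetaTerm q z k = _
  rw [mul_assoc, this, mul_inv_cancel_left₀ (qPochInf_self_ne_zero hq)]
end

section
/- Semi-finite Jacobi triple product recurrence: for $0<|q|<1$, $z \neq 0$, and integer $m \ge 0$, let $f(m) = \sum_{k=-\infty}^\infty \frac{q^{\binom{k}{2}} z^k}{(q^{m+1};q)_k}$. Then $f(m+1) = (1 + q^{m+1}/z)(1 - q^{m+1}) f(m)$. -/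
noncomputable def qPochInt (a q : ℂ) (k : ℤ) : ℂ := qPochInf a q / qPochInf (a * q ^ k) q

/-!
Multiplying the `k`-th term of `f m` by `(q^t; q)_∞`, `t = m + 1`, turns it into
`S_t(k) = q^(k(k-1)/2) z^k (q^(t+k); q)_∞`. Splitting off the first factor of
`(q^(t+k); q)_∞` gives `S_{t+1}(k) = S_t(k) + (q^t / z) S_t(k+1)`; summing over `k ∈ ℤ` and
shifting the index yields `∑ S_{t+1} = (1 + q^t / z) ∑ S_t`, while the normalising factors differ
by `(q^t; q)_∞ = (1 - q^t) (q^(t+1); q)_∞`. The series converge because `S_t(k) = 0` for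
`k ≤ -t` and the ratio of consecutive terms tends to `0` as `k → ∞`.
-/

open Filter Topology

lemma Int.add_one_mul_add_one_sub_one_ediv_two (k : ℤ) :
    (k + 1) * (k + 1 - 1) / 2 = k * (k - 1) / 2 + k := by
  rw [← Int.add_mul_ediv_left _ k two_ne_zero]
  ring_nf

section QPochhammer

variable {q : ℂ}

lemma multipliable_one_sub_mul_pow (a : ℂ) (hq : ‖q‖ < 1) :
    Multipliable fun j : ℕ => 1 - a * q ^ j := by
  simp_rw [sub_eq_add_neg]
  refine multipliable_one_add_of_summable ?_
  simpa [norm_mul, norm_pow] using (summable_geometric_of_lt_one (norm_nonneg q) hq).mul_left ‖a‖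

lemma qPochInf_eq_qPoch_mul (a : ℂ) (hq : ‖q‖ < 1) (n : ℕ) :
    qPochInf a q = qPoch a q n * qPochInf (a * q ^ n) q := by
  have htail : (fun j : ℕ => 1 - a * q ^ (j + n)) = fun j => 1 - a * q ^ n * q ^ j := by
    funext j
    ring
  have hmul : Multipliable fun j : ℕ => 1 - a * q ^ (j + n) := by
    rw [htail]
    exact multipliable_one_sub_mul_pow _ hq
  have hsplit := Multipliable.prod_mul_tprod_nat_mul' (f := fun j => 1 - a * q ^ j) hmul
  rw [htail] at hsplit
  rw [qPochInf, qPochInf, qPoch, hsplit]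

lemma qPochInf_eq_one_sub_mul (a : ℂ) (hq : ‖q‖ < 1) :
    qPochInf a q = (1 - a) * qPochInf (a * q) q := by
  simpa [qPoch] using qPochInf_eq_qPoch_mul a hq 1

lemma qPoch_ne_zero {a : ℂ} (ha : ‖a‖ < 1) (hq : ‖q‖ ≤ 1) (n : ℕ) : qPoch a q n ≠ 0 := by
  refine Finset.prod_ne_zero_iff.mpr fun j _ => (Units.oneSub (a * q ^ j) ?_).ne_zero
  rw [norm_mul, norm_pow]
  exact (mul_le_of_le_one_right (norm_nonneg a) (pow_le_one₀ (norm_nonneg q) hq)).trans_lt ha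

lemma norm_zpow_lt_one (hq0 : q ≠ 0) (hq : ‖q‖ < 1) {t : ℤ} (ht : 0 < t) : ‖q ^ t‖ < 1 := by
  rw [norm_zpow]
  exact zpow_lt_one₀ (norm_pos_iff.mpr hq0) hq ht

/-- The factor `1 - q ^ t * q ^ (-t)` vanishes. -/
lemma qPochInf_zpow_eq_zero (hq0 : q ≠ 0) (hq : ‖q‖ < 1) {t : ℤ} (ht : t ≤ 0) :
    qPochInf (q ^ t) q = 0 := by
  have hfactor : 1 - q ^ t * q ^ (-t).toNat = 0 := by
    rw [← zpow_natCast, ← zpow_add₀ hq0, Int.toNat_of_nonneg (by omega), add_neg_cancel,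
      zpow_zero, sub_self]
  rw [qPochInf_eq_qPoch_mul _ hq ((-t).toNat + 1), qPoch,
    Finset.prod_eq_zero (Finset.self_mem_range_succ _) hfactor, zero_mul]

lemma qPochInf_zpow_eq_qPoch_mul (hq0 : q ≠ 0) (hq : ‖q‖ < 1) (t : ℤ) (n : ℕ) :
    qPochInf (q ^ t) q = qPoch (q ^ t) q n * qPochInf (q ^ (t + n)) q := by
  rw [qPochInf_eq_qPoch_mul _ hq n, zpow_add₀ hq0, zpow_natCast]

lemma summable_zpow_mul_div_qPoch (a z : ℂ) (hq0 : q ≠ 0) (hq : ‖q‖ < 1) :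
    Summable fun n : ℕ => q ^ ((n : ℤ) * (n - 1) / 2) * z ^ n / qPoch a q n := by
  have hratio : Tendsto (fun n : ℕ => q ^ n * z / (1 - a * q ^ n)) atTop (𝓝 0) := by
    have hpow := tendsto_pow_atTop_nhds_zero_of_norm_lt_one hq
    have hlim := (hpow.mul_const z).div (tendsto_const_nhds.sub (hpow.const_mul a))
      (by simp : (1 : ℂ) - a * 0 ≠ 0)
    simp only [mul_zero, zero_mul, sub_zero, div_one] at hlim
    exact hlim
  refine summable_of_ratio_norm_eventually_le (r := 1 / 2) (by norm_num) ?_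
  filter_upwards [hratio.norm.eventually (gt_mem_nhds (by norm_num : ‖(0 : ℂ)‖ < 1 / 2))]
    with n hn
  have hsucc : q ^ (((n + 1 : ℕ) : ℤ) * ((n + 1 : ℕ) - 1) / 2) * z ^ (n + 1) / qPoch a q (n + 1)
      = q ^ ((n : ℤ) * (n - 1) / 2) * z ^ n / qPoch a q n * (q ^ n * z / (1 - a * q ^ n)) := by
    rw [Nat.cast_succ, Int.add_one_mul_add_one_sub_one_ediv_two, zpow_add₀ hq0, zpow_natCast,
      qPoch, Finset.prod_range_succ, ← qPoch, mul_div_mul_comm]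
    ring
  rw [hsucc, norm_mul, mul_comm]
  exact mul_le_mul_of_nonneg_right hn.le (norm_nonneg _)

end QPochhammer

noncomputable def semiJacobiTerm (q z : ℂ) (t k : ℤ) : ℂ :=
  q ^ (k * (k - 1) / 2) * z ^ k * qPochInf (q ^ (t + k)) q

section SemiJacobiTerm

variable {q z : ℂ}

lemma summable_semiJacobiTerm (hq0 : q ≠ 0) (hq : ‖q‖ < 1) {t : ℤ} (ht : 0 < t) :
    Summable (semiJacobiTerm q z t) := by
  refine Summable.of_nat_of_neg_add_one ?_ ?_
  · have hterm : (fun n : ℕ => semiJacobiTerm q z t n) = fun n : ℕ =>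
        qPochInf (q ^ t) q * (q ^ ((n : ℤ) * (n - 1) / 2) * z ^ n / qPoch (q ^ t) q n) := by
      funext n
      have hpoch := qPoch_ne_zero (norm_zpow_lt_one hq0 hq ht) hq.le n
      rw [semiJacobiTerm, qPochInf_zpow_eq_qPoch_mul hq0 hq t n, zpow_natCast]
      field_simp
    rw [hterm]
    exact (summable_zpow_mul_div_qPoch _ z hq0 hq).mul_left _
  · refine summable_of_ne_finset_zero (s := Finset.range t.toNat) fun n hn => ?_
    rw [Finset.mem_range, not_lt] at hn
    rw [semiJacobiTerm, qPochInf_zpow_eq_zero hq0 hq (by omega), mul_zero]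

lemma semiJacobiTerm_add_one (hq0 : q ≠ 0) (hq : ‖q‖ < 1) (hz : z ≠ 0) (t k : ℤ) :
    semiJacobiTerm q z (t + 1) k
      = semiJacobiTerm q z t k + q ^ t / z * semiJacobiTerm q z t (k + 1) := by
  have hsplit : qPochInf (q ^ (t + k)) q = (1 - q ^ (t + k)) * qPochInf (q ^ (t + k + 1)) q := by
    rw [qPochInf_eq_one_sub_mul _ hq, zpow_add_one₀ hq0]
  simp only [semiJacobiTerm]
  rw [hsplit, Int.add_one_mul_add_one_sub_one_ediv_two, add_right_comm t 1 k, ← add_assoc t k 1,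
    zpow_add₀ hq0 (k * (k - 1) / 2) k, zpow_add₀ hq0 t k, zpow_add_one₀ hz]
  field_simp
  ring

lemma tsum_semiJacobiTerm_add_one (hq0 : q ≠ 0) (hq : ‖q‖ < 1) (hz : z ≠ 0) {t : ℤ}
    (ht : 0 < t) :
    ∑' k, semiJacobiTerm q z (t + 1) k = (1 + q ^ t / z) * ∑' k, semiJacobiTerm q z t k := by
  have hsum := summable_semiJacobiTerm (z := z) hq0 hq ht
  have hshift : ∑' k, semiJacobiTerm q z t (k + 1) = ∑' k, semiJacobiTerm q z t k :=
    (Equiv.addRight 1).tsum_eq _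
  have hsum_shift : Summable fun k => q ^ t / z * semiJacobiTerm q z t (k + 1) :=
    ((Equiv.addRight 1).summable_iff.mpr hsum).mul_left _
  simp_rw [semiJacobiTerm_add_one hq0 hq hz t]
  rw [hsum.tsum_add hsum_shift, tsum_mul_left, hshift]
  ring

lemma tsum_div_qPochInt_eq (hq0 : q ≠ 0) (t : ℤ) :
    ∑' k : ℤ, q ^ (k * (k - 1) / 2) * z ^ k / qPochInt (q ^ t) q k
      = (∑' k, semiJacobiTerm q z t k) / qPochInf (q ^ t) q := by
  simp_rw [qPochInt, ← zpow_add₀ hq0, div_div_eq_mul_div, semiJacobiTerm]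
  exact tsum_div_const

end SemiJacobiTerm

theorem semi_finite_jacobi (q z : ℂ) (hq0 : q ≠ 0) (hq : ‖q‖ < 1) (hz : z ≠ 0)
    (f : ℕ → ℂ)
    (hf : ∀ m : ℕ, f m = ∑' k : ℤ, q ^ (k * (k - 1) / 2) * z ^ k / qPochInt (q ^ (m + 1)) q k)
    (m : ℕ) :
    f (m + 1) = (1 + q ^ (m + 1) / z) * (1 - q ^ (m + 1)) * f m := by
  have hf_eq : ∀ n : ℕ,
      f n = (∑' k, semiJacobiTerm q z (n + 1) k) / qPochInf (q ^ ((n : ℤ) + 1)) q := by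
    intro n
    rw [hf n, ← zpow_natCast, tsum_div_qPochInt_eq hq0, Nat.cast_succ]
  have hpos : (0 : ℤ) < m + 1 := by omega
  have hunit : 1 - q ^ ((m : ℤ) + 1) ≠ 0 := (Units.oneSub _ (norm_zpow_lt_one hq0 hq hpos)).ne_zero
  have hpow : q ^ (m + 1) = q ^ ((m : ℤ) + 1) := by rw [← zpow_natCast, Nat.cast_succ]
  rw [hf_eq, hf_eq, Nat.cast_succ, hpow, tsum_semiJacobiTerm_add_one hq0 hq hz hpos,
    qPochInf_eq_one_sub_mul (q ^ ((m : ℤ) + 1)) hq, ← zpow_add_one₀ hq0]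
  field_simp
end
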